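/- Let d ∈ ℕ with d ≥ 1, α, β ∈ [0,∞) and v ∈ ℤ^d. Then 4^{−β} (λ_v)^{−β} · Σ_{k ∈ ℤ^d, ‖k‖ ≤ ‖v‖/2} 1/(λ_k)^α ≤ Σ_{k ∈ ℤ^d, ‖k‖ ≤ ‖v‖/2} 1/[(λ_k)^α (λ_{v−k})^β] ≤ 4^{β} (λ_v)^{−β} · Σ_{k ∈ ℤ^d, ‖k‖ ≤ ‖v‖/2} 1/(λ_k)^α. -/

import Mathlib

open scoped ENNReal

/-- `λ_x = 1 + x₁² + ⋯ + x_d²` for a lattice point `x ∈ ℤ^d`. -/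
noncomputable def lam {d : ℕ} (x : Fin d → ℤ) : ℝ := 1 + ∑ i, ((x i : ℝ)) ^ 2

/-- The Euclidean norm of a lattice point `x ∈ ℤ^d`. -/
noncomputable def znorm {d : ℕ} (x : Fin d → ℤ) : ℝ := Real.sqrt (∑ i, ((x i : ℝ)) ^ 2)

/-!
If `‖k‖ ≤ ‖v‖/2` then `‖v - k‖` lies between `‖v‖/2` and `3‖v‖/2`, so the weights
`λ_v` and `λ_{v-k}` agree up to a factor `4`. Hence `(λ_{v-k})^{-β}` lies between `4^{-β} (λ_v)^{-β}`
and `4^{β} (λ_v)^{-β}` on every term of the sum, and the bounds follow termwise.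
-/

section Norm

variable {E : Type*} [SeminormedAddCommGroup E] {v k : E}

lemma one_add_sq_norm_le_four_mul_sub (h : ‖k‖ ≤ ‖v‖ / 2) :
    1 + ‖v‖ ^ 2 ≤ 4 * (1 + ‖v - k‖ ^ 2) := by
  have htri : ‖v‖ ≤ ‖v - k‖ + ‖k‖ := norm_le_norm_sub_add v k
  nlinarith [norm_nonneg k, norm_nonneg (v - k)]

lemma one_add_sq_norm_sub_le_four_mul (h : ‖k‖ ≤ ‖v‖ / 2) :
    1 + ‖v - k‖ ^ 2 ≤ 4 * (1 + ‖v‖ ^ 2) := by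
  have htri : ‖v - k‖ ≤ ‖v‖ + ‖k‖ := norm_sub_le v k
  nlinarith [norm_nonneg k, norm_nonneg (v - k)]

end Norm

section Lattice

variable {d : ℕ}

noncomputable def euclideanOfInt (x : Fin d → ℤ) : EuclideanSpace ℝ (Fin d) :=
  WithLp.toLp 2 fun i => (x i : ℝ)

lemma euclideanOfInt_sub (x y : Fin d → ℤ) :
    euclideanOfInt (x - y) = euclideanOfInt x - euclideanOfInt y := by
  ext i; simp [euclideanOfInt]

lemma znorm_eq_norm_euclideanOfInt (x : Fin d → ℤ) : znorm x = ‖euclideanOfInt x‖ := by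
  simp [znorm, euclideanOfInt, EuclideanSpace.norm_eq, sq_abs]

lemma lam_eq_one_add_sq_norm (x : Fin d → ℤ) : lam x = 1 + ‖euclideanOfInt x‖ ^ 2 := by
  rw [← znorm_eq_norm_euclideanOfInt, znorm, Real.sq_sqrt (by positivity), lam]

lemma lam_pos (x : Fin d → ℤ) : 0 < lam x := by
  unfold lam; positivity

variable {v k : Fin d → ℤ}

lemma lam_le_four_mul_lam_sub (h : znorm k ≤ znorm v / 2) : lam v ≤ 4 * lam (v - k) := by
  rw [znorm_eq_norm_euclideanOfInt, znorm_eq_norm_euclideanOfInt] at h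
  rw [lam_eq_one_add_sq_norm, lam_eq_one_add_sq_norm, euclideanOfInt_sub]
  exact one_add_sq_norm_le_four_mul_sub h

lemma lam_sub_le_four_mul_lam (h : znorm k ≤ znorm v / 2) : lam (v - k) ≤ 4 * lam v := by
  rw [znorm_eq_norm_euclideanOfInt, znorm_eq_norm_euclideanOfInt] at h
  rw [lam_eq_one_add_sq_norm, lam_eq_one_add_sq_norm, euclideanOfInt_sub]
  exact one_add_sq_norm_sub_le_four_mul h

end Lattice

section Rpow

variable {a b c β : ℝ}

lemma rpow_neg_mul_rpow_neg_le_of_le_mul (ha : 0 < a) (hb : 0 ≤ b) (hc : 0 ≤ c) (hβ : 0 ≤ β)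
    (h : a ≤ c * b) : c ^ (-β) * b ^ (-β) ≤ a ^ (-β) := by
  rw [← Real.mul_rpow hc hb]
  exact Real.rpow_le_rpow_of_nonpos ha h (neg_nonpos.mpr hβ)

lemma rpow_neg_le_rpow_mul_rpow_neg_of_le_mul (ha : 0 ≤ a) (hb : 0 < b) (hc : 0 < c) (hβ : 0 ≤ β)
    (h : b ≤ c * a) : a ^ (-β) ≤ c ^ β * b ^ (-β) := by
  have hlow := rpow_neg_mul_rpow_neg_le_of_le_mul hb ha hc.le hβ h
  rwa [Real.rpow_neg hc.le, inv_mul_le_iff₀ (Real.rpow_pos_of_pos hc β)] at hlow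

lemma one_div_mul_rpow_eq (a : ℝ) (hb : 0 ≤ b) : 1 / (a * b ^ β) = b ^ (-β) * (1 / a) := by
  rw [Real.rpow_neg hb, one_div, one_div, mul_inv, mul_comm]

end Rpow

section Tsum

variable {ι : Type*} (p : ι → Prop) [DecidablePred p]

lemma ENNReal.tsum_ite_ofReal_mono {f g : ι → ℝ} (h : ∀ i, p i → f i ≤ g i) :
    ∑' i, (if p i then ENNReal.ofReal (f i) else 0)
      ≤ ∑' i, if p i then ENNReal.ofReal (g i) else 0 :=
  ENNReal.tsum_le_tsum fun i => by
    split_ifs with hi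
    · exact ENNReal.ofReal_le_ofReal (h i hi)
    · rfl

lemma ENNReal.ofReal_mul_tsum_ite_ofReal {c : ℝ} (hc : 0 ≤ c) (f : ι → ℝ) :
    ENNReal.ofReal c * ∑' i, (if p i then ENNReal.ofReal (f i) else 0)
      = ∑' i, if p i then ENNReal.ofReal (c * f i) else 0 := by
  rw [← ENNReal.tsum_mul_left]
  congr 1 with i
  split_ifs <;> simp [ENNReal.ofReal_mul hc]

end Tsum

theorem twosided_first_general (d : ℕ) (α β : ℝ) (hβ : 0 ≤ β)
    (v : Fin d → ℤ) :
    (ENNReal.ofReal ((4 : ℝ) ^ (-β) * (lam v) ^ (-β)) *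
        ∑' k : Fin d → ℤ,
          (if znorm k ≤ znorm v / 2 then ENNReal.ofReal (1 / (lam k) ^ α) else 0))
      ≤ (∑' k : Fin d → ℤ,
          (if znorm k ≤ znorm v / 2 then
            ENNReal.ofReal (1 / ((lam k) ^ α * (lam (v - k)) ^ β)) else 0))
    ∧ (∑' k : Fin d → ℤ,
          (if znorm k ≤ znorm v / 2 then
            ENNReal.ofReal (1 / ((lam k) ^ α * (lam (v - k)) ^ β)) else 0))
      ≤ ENNReal.ofReal ((4 : ℝ) ^ β * (lam v) ^ (-β)) *
        ∑' k : Fin d → ℤ,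
          (if znorm k ≤ znorm v / 2 then ENNReal.ofReal (1 / (lam k) ^ α) else 0) := by
  have hv := lam_pos v
  have hsummand (k : Fin d → ℤ) :
      1 / (lam k ^ α * lam (v - k) ^ β) = lam (v - k) ^ (-β) * (1 / lam k ^ α) :=
    one_div_mul_rpow_eq _ (lam_pos _).le
  have hweight_nonneg (k : Fin d → ℤ) : 0 ≤ 1 / lam k ^ α :=
    one_div_nonneg.mpr (Real.rpow_nonneg (lam_pos k).le α)
  constructor
  · rw [ENNReal.ofReal_mul_tsum_ite_ofReal _ (by positivity)]
    refine ENNReal.tsum_ite_ofReal_mono _ fun k hk => ?_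
    rw [hsummand]
    refine mul_le_mul_of_nonneg_right ?_ (hweight_nonneg k)
    exact rpow_neg_mul_rpow_neg_le_of_le_mul (lam_pos _) hv.le (by norm_num) hβ
      (lam_sub_le_four_mul_lam hk)
  · rw [ENNReal.ofReal_mul_tsum_ite_ofReal _ (by positivity)]
    refine ENNReal.tsum_ite_ofReal_mono _ fun k hk => ?_
    rw [hsummand]
    refine mul_le_mul_of_nonneg_right ?_ (hweight_nonneg k)
    exact rpow_neg_le_rpow_mul_rpow_neg_of_le_mul (lam_pos _).le hv (by norm_num) hβ
      (lam_le_four_mul_lam_sub hk)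

/-- Two-sided bounds for discrete convolutions, first estimate:
`4^{−β} (λ_v)^{−β} Σ_{‖k‖ ≤ ‖v‖/2} (λ_k)^{−α}
  ≤ Σ_{‖k‖ ≤ ‖v‖/2} (λ_k)^{−α} (λ_{v−k})^{−β}
  ≤ 4^{β} (λ_v)^{−β} Σ_{‖k‖ ≤ ‖v‖/2} (λ_k)^{−α}`,
with the sums taken in `[0,∞]`. -/
theorem twosided_first (d : ℕ) (hd : 1 ≤ d) (α β : ℝ) (hα : 0 ≤ α) (hβ : 0 ≤ β)
    (v : Fin d → ℤ) :
    (ENNReal.ofReal ((4 : ℝ) ^ (-β) * (lam v) ^ (-β)) *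
        ∑' k : Fin d → ℤ,
          (if znorm k ≤ znorm v / 2 then ENNReal.ofReal (1 / (lam k) ^ α) else 0))
      ≤ (∑' k : Fin d → ℤ,
          (if znorm k ≤ znorm v / 2 then
            ENNReal.ofReal (1 / ((lam k) ^ α * (lam (v - k)) ^ β)) else 0))
    ∧ (∑' k : Fin d → ℤ,
          (if znorm k ≤ znorm v / 2 then
            ENNReal.ofReal (1 / ((lam k) ^ α * (lam (v - k)) ^ β)) else 0))
      ≤ ENNReal.ofReal ((4 : ℝ) ^ β * (lam v) ^ (-β)) *
        ∑' k : Fin d → ℤ,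
          (if znorm k ≤ znorm v / 2 then ENNReal.ofReal (1 / (lam k) ^ α) else 0) :=
  twosided_first_general d α β hβ v
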